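/- Let U ⊆ ℝ^n be a convex set. Then U contains at most one leximin-optimal element; that is, if π and π' are both leximin-optimal in U, then π = π'. -/

import Mathlib

/-!
Leximin dominance is the strict lexicographic order on sorted vectors, so it is total up to
equality of sorted vectors; hence two leximin-optimal points `π`, `π'` have the same sorted
vector. The sum of the `k` smallest entries is a concave function of the vector (it is a minimum
of linear functions), so the midpoint `z` of `π` and `π'` has all these partial sums at least
those of `π`. If `z` and `π` had different sorted vectors, `π` would dominate `z`, making some
partial sum of `z` smaller; so `z`, `π`, `π'` share one sorted vector, hence one sum of squares,
and by strict convexity of the sum of squares `π = π'`.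
-/

/-- The vector `x` sorted in nondecreasing order. -/
noncomputable def sortVec {n : ℕ} (x : Fin n → ℝ) : Fin n → ℝ := x ∘ Tuple.sort x

/-- `x` leximin-dominates `y`. -/
def LexDom {n : ℕ} (x y : Fin n → ℝ) : Prop :=
  ∃ k : Fin n, (∀ j : Fin n, j < k → sortVec x j = sortVec y j) ∧ sortVec y k < sortVec x k

open Finset

theorem Finset.sum_le_sum_of_card_eq_of_le_of_le {ι β : Type*} [DecidableEq ι] [AddCommMonoid β]
    [LinearOrder β] [IsOrderedAddMonoid β] {s t : Finset ι} {f : ι → β} {c : β} (hst : #s = #t)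
    (hs : ∀ i ∈ s, f i ≤ c) (ht : ∀ j ∈ t \ s, c ≤ f j) :
    ∑ i ∈ s, f i ≤ ∑ j ∈ t, f j :=
  calc ∑ i ∈ s, f i ≤ ∑ i ∈ s ∩ t, f i + #(s \ t) • c := by
        grw [← sum_inter_add_sum_sdiff s t,
          ← sum_le_card_nsmul _ _ _ fun i hi ↦ hs i (mem_sdiff.1 hi).1]
    _ = ∑ j ∈ t ∩ s, f j + #(t \ s) • c := by rw [inter_comm, card_sdiff_comm hst]
    _ ≤ ∑ j ∈ t, f j := by
        grw [← sum_inter_add_sum_sdiff t s, card_nsmul_le_sum _ _ _ ht]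

section

variable {n : ℕ}

lemma lexDom_iff_toLex_lt {x y : Fin n → ℝ} :
    LexDom x y ↔ toLex (sortVec y) < toLex (sortVec x) :=
  exists_congr fun _ ↦ and_congr_left' (forall₂_congr fun _ _ ↦ eq_comm)

lemma sortVec_eq_of_not_lexDom {x y : Fin n → ℝ} (hxy : ¬ LexDom x y) (hyx : ¬ LexDom y x) :
    sortVec x = sortVec y := by
  rw [lexDom_iff_toLex_lt] at hxy hyx
  exact toLex_inj.1 (le_antisymm (not_lt.1 hxy) (not_lt.1 hyx))

lemma sum_Iic_sortVec_le_sum (x : Fin n → ℝ) (k : Fin n) {A : Finset (Fin n)}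
    (hA : #A = #(Iic k)) : ∑ j ∈ Iic k, sortVec x j ≤ ∑ i ∈ A, x i := by
  rw [show ∑ j ∈ Iic k, sortVec x j = ∑ i ∈ (Iic k).map (Tuple.sort x).toEmbedding, x i from
    (sum_map (Iic k) (Tuple.sort x).toEmbedding x).symm]
  refine sum_le_sum_of_card_eq_of_le_of_le (c := sortVec x k) (by simp [hA]) ?_ ?_
  · simp only [mem_map, mem_Iic]
    rintro _ ⟨j, hj, rfl⟩
    exact Tuple.monotone_sort x hj
  · intro i hi
    obtain ⟨j, rfl⟩ := (Tuple.sort x).surjective i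
    have : k < j := by simpa using (mem_sdiff.1 hi).2
    exact Tuple.monotone_sort x this.le

lemma sum_Iic_sortVec_concave {a b : ℝ} (ha : 0 ≤ a) (hb : 0 ≤ b) (x y : Fin n → ℝ)
    (k : Fin n) :
    a * ∑ j ∈ Iic k, sortVec x j + b * ∑ j ∈ Iic k, sortVec y j
      ≤ ∑ j ∈ Iic k, sortVec (a • x + b • y) j := by
  set A := (Iic k).map (Tuple.sort (a • x + b • y)).toEmbedding
  have hA : #A = #(Iic k) := card_map _
  calc a * ∑ j ∈ Iic k, sortVec x j + b * ∑ j ∈ Iic k, sortVec y j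
      ≤ a * ∑ i ∈ A, x i + b * ∑ i ∈ A, y i := by
        gcongr <;> exact sum_Iic_sortVec_le_sum _ k hA
    _ = ∑ j ∈ Iic k, sortVec (a • x + b • y) j := by
        simp [A, sum_add_distrib, mul_sum, sortVec]

lemma LexDom.exists_sum_Iic_lt {x y : Fin n → ℝ} (h : LexDom x y) :
    ∃ k, ∑ j ∈ Iic k, sortVec y j < ∑ j ∈ Iic k, sortVec x j := by
  obtain ⟨k, heq, hlt⟩ := h
  refine ⟨k, ?_⟩
  rw [Iic_eq_cons_Iio, sum_cons, sum_cons, sum_congr rfl fun j hj ↦ heq j (mem_Iio.1 hj)]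
  exact add_lt_add_left hlt _

lemma sum_sq_eq_of_sortVec_eq {x y : Fin n → ℝ} (h : sortVec x = sortVec y) :
    ∑ i, x i ^ 2 = ∑ i, y i ^ 2 := by
  calc ∑ i, x i ^ 2 = ∑ i, sortVec x i ^ 2 := (Equiv.sum_comp (Tuple.sort x) (x · ^ 2)).symm
    _ = ∑ i, sortVec y i ^ 2 := by rw [h]
    _ = ∑ i, y i ^ 2 := Equiv.sum_comp (Tuple.sort y) (y · ^ 2)

lemma eq_of_sum_sq_midpoint {ι : Type*} [Fintype ι] {x y : ι → ℝ}
    (hxy : ∑ i, x i ^ 2 = ∑ i, y i ^ 2)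
    (hmid : ∑ i, ((1 / 2 : ℝ) • x + (1 / 2 : ℝ) • y) i ^ 2 = ∑ i, x i ^ 2) : x = y := by
  have parallelogram : ∑ i, (x i - y i) ^ 2 = 2 * ∑ i, x i ^ 2 + 2 * ∑ i, y i ^ 2
      - 4 * ∑ i, ((1 / 2 : ℝ) • x + (1 / 2 : ℝ) • y) i ^ 2 := by
    simp only [mul_sum, ← sum_add_distrib, ← sum_sub_distrib]
    refine sum_congr rfl fun i _ ↦ ?_
    simp only [Pi.add_apply, Pi.smul_apply, smul_eq_mul]
    ring
  have hsum : ∑ i, (x i - y i) ^ 2 = 0 := by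
    rw [parallelogram, hmid, hxy]
    ring
  have hsq := (Fintype.sum_eq_zero_iff_of_nonneg fun i ↦ sq_nonneg (x i - y i)).1 hsum
  funext i
  exact sub_eq_zero.1 (pow_eq_zero_iff two_ne_zero |>.1 (congrFun hsq i))

end

/-- A convex set contains at most one leximin-optimal element. -/
theorem leximinOpt_unique_of_convex (n : ℕ) (U : Set (Fin n → ℝ)) (hU : Convex ℝ U)
    (π π' : Fin n → ℝ)
    (hπ : π ∈ U) (hopt : ∀ ρ ∈ U, ¬ LexDom ρ π)
    (hπ' : π' ∈ U) (hopt' : ∀ ρ ∈ U, ¬ LexDom ρ π') :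
    π = π' := by
  set z := (1 / 2 : ℝ) • π + (1 / 2 : ℝ) • π'
  have hsort : sortVec π = sortVec π' := sortVec_eq_of_not_lexDom (hopt' π hπ) (hopt π' hπ')
  have hz : sortVec z = sortVec π := by
    refine sortVec_eq_of_not_lexDom (hopt z (hU hπ hπ' (by norm_num) (by norm_num) (by norm_num)))
      fun hdom ↦ ?_
    obtain ⟨k, hk⟩ := hdom.exists_sum_Iic_lt
    have := sum_Iic_sortVec_concave (a := 1 / 2) (b := 1 / 2) (by norm_num) (by norm_num) π π' k
    rw [← hsort] at this
    linarith
  exact eq_of_sum_sq_midpoint (sum_sq_eq_of_sortVec_eq hsort) (sum_sq_eq_of_sortVec_eq hz)
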